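/- Let M be a c-maximally ST-robust DAG with n inputs and n outputs. Then O(M) is maximally ST-robust, i.e., (k, n−k)-ST-robust for all 0 ≤ k ≤ n, with respect to its n new input nodes and n new output nodes. -/

import Mathlib

/-! ## Basic digraph notions -/

/-- A directed path in a digraph `Adj`: a nonempty list of vertices, each
consecutive pair joined by a directed edge.  Its length (number of edges)
is `p.length - 1`, so a path "of length d" is a list with `p.length = d + 1`. -/
def PathIn {V : Type*} (Adj : V → V → Prop) (p : List V) : Prop :=
  p ≠ [] ∧ p.Chain' Adj

/-- A digraph is acyclic (is a DAG) if it has no directed cycle. -/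
def Acyclic {V : Type*} (Adj : V → V → Prop) : Prop :=
  ∀ v, ¬ Relation.TransGen Adj v v

/-- In-degree of a vertex. -/
noncomputable def indeg {V : Type*} (Adj : V → V → Prop) (v : V) : ℕ :=
  Nat.card {u // Adj u v}

/-- Out-degree of a vertex. -/
noncomputable def outdeg {V : Type*} (Adj : V → V → Prop) (v : V) : ℕ :=
  Nat.card {w // Adj v w}

/-- `δ(v) = max(indeg(v), outdeg(v))`. -/
noncomputable def delta {V : Type*} (Adj : V → V → Prop) (v : V) : ℕ :=
  max (indeg Adj v) (outdeg Adj v)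

/-- The number of edges of a digraph. -/
noncomputable def numEdges {V : Type*} (Adj : V → V → Prop) : ℕ :=
  Nat.card {e : V × V // Adj e.1 e.2}

/-- `(e,d)`-depth-robustness: for every set `S` of at most `e` vertices,
the graph minus `S` contains a directed path of length `d` (i.e. `d` edges). -/
def DepthRobust {V : Type*} (Adj : V → V → Prop) (e d : ℕ) : Prop :=
  ∀ S : Finset V, S.card ≤ e →
    ∃ p : List V, PathIn Adj p ∧ (∀ v ∈ p, v ∉ S) ∧ p.length = d + 1

/-- `(e,d)`-edge-depth-robustness: for every set `F` of at most `e` edges,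
the graph minus `F` contains a directed path of length `d`. -/
def EdgeDepthRobust {V : Type*} (Adj : V → V → Prop) (e d : ℕ) : Prop :=
  ∀ F : Finset (V × V), (∀ f ∈ F, Adj f.1 f.2) → F.card ≤ e →
    ∃ p : List V, PathIn (fun u w => Adj u w ∧ (u, w) ∉ F) p ∧ p.length = d + 1

/-- `u` is joined to `v` by a directed path all of whose vertices avoid `S`. -/
def ConnAvoiding {V : Type*} (Adj : V → V → Prop) (S : Finset V) (u v : V) : Prop :=
  ∃ p : List V, PathIn Adj p ∧ (∀ x ∈ p, x ∉ S) ∧ p.head? = some u ∧ p.getLast? = some v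

/-- `u` is joined to `v` by a directed path of length at least `d` avoiding `S`. -/
def ConnAvoidingLen {V : Type*} (Adj : V → V → Prop) (S : Finset V) (d : ℕ) (u v : V) : Prop :=
  ∃ p : List V, PathIn Adj p ∧ (∀ x ∈ p, x ∉ S) ∧ p.head? = some u ∧
    p.getLast? = some v ∧ d + 1 ≤ p.length

/-! ## Digraphs with designated inputs and outputs -/

/-- A finite digraph with `n` designated (distinct) inputs and `n` designated
(distinct) outputs. -/
structure IOGraph (n : ℕ) where
  V : Type
  [fin : Fintype V]
  [dec : DecidableEq V]
  Adj : V → V → Prop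
  inp : Fin n ↪ V
  out : Fin n ↪ V

attribute [instance] IOGraph.fin IOGraph.dec

/-- `(k1,k2)`-ST-robustness: after deleting any set `D` of at most `k1` vertices
there remain at least `k2` inputs and `k2` outputs such that every one of these
inputs is connected to every one of these outputs in `G - D`. -/
def STRobust {n : ℕ} (G : IOGraph n) (k1 k2 : ℕ) : Prop :=
  ∀ D : Finset G.V, D.card ≤ k1 →
    ∃ A B : Finset (Fin n), k2 ≤ A.card ∧ k2 ≤ B.card ∧
      ∀ a ∈ A, ∀ b ∈ B, ConnAvoiding G.Adj D (G.inp a) (G.out b)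

/-- `(k1,k2,d)`-ST-robustness: as `STRobust`, with all the connecting paths of
length at least `d`. -/
def STRobustD {n : ℕ} (G : IOGraph n) (k1 k2 d : ℕ) : Prop :=
  ∀ D : Finset G.V, D.card ≤ k1 →
    ∃ A B : Finset (Fin n), k2 ≤ A.card ∧ k2 ≤ B.card ∧
      ∀ a ∈ A, ∀ b ∈ B, ConnAvoidingLen G.Adj D d (G.inp a) (G.out b)

/-- Maximally ST-robust: `(k, n-k)`-ST-robust for all `0 ≤ k ≤ n`. -/
def MaxSTRobust {n : ℕ} (G : IOGraph n) : Prop := ∀ k ≤ n, STRobust G k (n - k)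

/-- Maximally ST-robust with depth `d`: `(k, n-k, d)`-ST-robust for all `0 ≤ k ≤ n`. -/
def MaxSTRobustD {n : ℕ} (G : IOGraph n) (d : ℕ) : Prop := ∀ k ≤ n, STRobustD G k (n - k) d

/-- An `n`-superconcentrator: for every `1 ≤ r ≤ n` and every `r` inputs and `r`
outputs there are `r` vertex-disjoint directed paths connecting the chosen inputs
to the chosen outputs. -/
def Superconcentrator {n : ℕ} (G : IOGraph n) : Prop :=
  ∀ r, 1 ≤ r → r ≤ n → ∀ X Y : Finset (Fin n), X.card = r → Y.card = r →
    ∃ P : Fin r → List G.V,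
      (∀ i, PathIn G.Adj (P i) ∧ (∃ x ∈ X, (P i).head? = some (G.inp x)) ∧
        ∃ y ∈ Y, (P i).getLast? = some (G.out y)) ∧
      ∀ i j, i ≠ j → ∀ v ∈ P i, v ∉ P j

/-- An `n`-connector: an `n`-superconcentrator such that moreover, for every
`1 ≤ r ≤ n`, every sequence of `r` distinct inputs and every sequence of `r`
distinct outputs, there are `r` vertex-disjoint directed paths where the `i`-th
path goes from the `i`-th chosen input to the `i`-th chosen output. -/
def Connector {n : ℕ} (G : IOGraph n) : Prop :=
  Superconcentrator G ∧
  ∀ r, 1 ≤ r → r ≤ n → ∀ x y : Fin r ↪ Fin n,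
    ∃ P : Fin r → List G.V,
      (∀ i, PathIn G.Adj (P i) ∧ (P i).head? = some (G.inp (x i)) ∧
        (P i).getLast? = some (G.out (y i))) ∧
      ∀ i j, i ≠ j → ∀ v ∈ P i, v ∉ P j

/-- A bundled finite digraph. -/
structure Dig where
  V : Type
  [fin : Fintype V]
  [dec : DecidableEq V]
  Adj : V → V → Prop

attribute [instance] Dig.fin Dig.dec

/-- `(s,t,ε)`-hardness of a graph together with a challenge set `VC`: for every
set `S` of at most `s` vertices, at least a `(1-ε)` fraction of the nodes of `VC`
have depth at least `t` in `G - S` (i.e. are the endpoint of a directed path of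
length `≥ t` in `G - S`). -/
def Hard {T : Type*} (Adj : T → T → Prop) (VC : Finset T) (s t : ℕ) (ε : ℝ) : Prop :=
  ∀ S : Finset T, S.card ≤ s →
    (1 - ε) * (VC.card : ℝ) ≤
      (Set.ncard {v | v ∈ VC ∧ ∃ p : List T, PathIn Adj p ∧ (∀ x ∈ p, x ∉ S) ∧
        p.getLast? = some v ∧ t + 1 ≤ p.length} : ℝ)

/-- The construction `O(M)`: `⌈1/c⌉` disjoint copies of `M` together with `n`
new input nodes and `n` new output nodes; the `k`-th new input feeds the `k`-th
input of every copy, and the `k`-th output of every copy feeds the `k`-th new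
output. -/
noncomputable def OMgraph {n : ℕ} (M : IOGraph n) (c : ℝ) : IOGraph n where
  V := Fin n ⊕ (Fin ⌈1 / c⌉₊ × M.V) ⊕ Fin n
  Adj := fun x y =>
    (∃ (k : Fin n) (j : Fin ⌈1 / c⌉₊),
        x = Sum.inl k ∧ y = Sum.inr (Sum.inl (j, M.inp k))) ∨
    (∃ (j : Fin ⌈1 / c⌉₊) (a b : M.V), M.Adj a b ∧
        x = Sum.inr (Sum.inl (j, a)) ∧ y = Sum.inr (Sum.inl (j, b))) ∨
    (∃ (k : Fin n) (j : Fin ⌈1 / c⌉₊),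
        x = Sum.inr (Sum.inl (j, M.out k)) ∧ y = Sum.inr (Sum.inr k))
  inp := ⟨Sum.inl, Sum.inl_injective⟩
  out := ⟨fun k => Sum.inr (Sum.inr k), fun a b h => by simpa using h⟩

/-!
Delete at most `k ≤ n` vertices from `O(M)`. Since the `⌈1/c⌉` copies of `M` are disjoint, one
of them loses at most `k / ⌈1/c⌉ ≤ c n` vertices, so by the robustness of `M` it keeps `n - d`
inputs and `n - d` outputs, all mutually connected, where `d` is the number of its deleted
vertices. Routing through this copy, a new input `i_a` reaches a new output `o_b` whenever `a`
and `b` are among these survivors and `i_a`, `o_b` themselves are not deleted. At most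
`k - d` new inputs (resp. outputs) are deleted, which leaves `n - k` of each.
-/

open Finset

namespace ConnAvoiding

variable {V W : Type*} {Adj : V → V → Prop} {S : Finset V} {u v w : V}

theorem map {AdjW : W → W → Prop} {T : Finset W} (f : V → W)
    (hf : ∀ x y, Adj x y → AdjW (f x) (f y)) (hT : ∀ x, x ∉ S → f x ∉ T)
    (h : ConnAvoiding Adj S u v) : ConnAvoiding AdjW T (f u) (f v) := by
  obtain ⟨p, ⟨hne, hchain⟩, hS, hhead, hlast⟩ := h
  refine ⟨p.map f, ⟨by simpa using hne, ?_⟩, ?_, ?_, ?_⟩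
  · exact List.isChain_map_of_isChain f hf hchain
  · simp only [List.mem_map, forall_exists_index, and_imp]
    rintro _ x hx rfl
    exact hT x (hS x hx)
  · simp [hhead]
  · simp [hlast]

theorem cons (huv : Adj u v) (hu : u ∉ S) (h : ConnAvoiding Adj S v w) :
    ConnAvoiding Adj S u w := by
  obtain ⟨p, ⟨hne, hchain⟩, hS, hhead, hlast⟩ := h
  refine ⟨u :: p, ⟨List.cons_ne_nil u p, ?_⟩, ?_, rfl, ?_⟩
  · exact List.IsChain.cons hchain (by simpa [hhead] using huv)
  · simp only [List.mem_cons, forall_eq_or_imp]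
    exact ⟨hu, hS⟩
  · simp [List.getLast?_cons, hlast]

theorem concat (h : ConnAvoiding Adj S u v) (hvw : Adj v w) (hw : w ∉ S) :
    ConnAvoiding Adj S u w := by
  obtain ⟨p, ⟨hne, hchain⟩, hS, hhead, hlast⟩ := h
  refine ⟨p ++ [w], ⟨by simp, ?_⟩, ?_, ?_, List.getLast?_concat⟩
  · exact List.IsChain.append hchain (List.isChain_singleton w) (by simpa [hlast] using hvw)
  · simp only [List.mem_append, List.mem_singleton]
    rintro x (hx | rfl)
    exacts [hS x hx, hw]
  · rwa [List.head?_append_of_ne_nil p hne]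

end ConnAvoiding

namespace OMgraph

variable {n : ℕ} (M : IOGraph n) (c : ℝ)

def copy (j : Fin ⌈1 / c⌉₊) (v : M.V) : (OMgraph M c).V :=
  Sum.inr (Sum.inl (j, v))

noncomputable def deletedInCopy (D : Finset (OMgraph M c).V) (j : Fin ⌈1 / c⌉₊) :
    Finset M.V :=
  {v | copy M c j v ∈ D}

theorem card_deletedInCopy_le_card_filter (D : Finset (OMgraph M c).V) (j : Fin ⌈1 / c⌉₊) :
    #(deletedInCopy M c D j) ≤ #{x ∈ D.toRight.toLeft | x.1 = j} := by
  refine card_le_card_of_injOn (fun v => (j, v)) ?_ (fun _ _ _ _ h => (Prod.ext_iff.mp h).2)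
  intro v hv
  have hv : copy M c j v ∈ D := by simpa [deletedInCopy] using hv
  exact mem_coe.mpr (mem_filter.mpr ⟨mem_toLeft.mpr (mem_toRight.mpr hv), rfl⟩)

-- `D.toLeft`, `D.toRight.toLeft` and `D.toRight.toRight` are the deleted new inputs, copy
-- vertices and new outputs.
theorem card_toLeft_add_card_deletedInCopy_add_card_toRight_toRight_le
    (D : Finset (OMgraph M c).V) (j : Fin ⌈1 / c⌉₊) :
    #D.toLeft + #(deletedInCopy M c D j) + #D.toRight.toRight ≤ #D := by
  have hcopy := (card_deletedInCopy_le_card_filter M c D j).trans (card_filter_le _ _)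
  have hD : #D.toLeft + #D.toRight = #D := D.card_toLeft_add_card_toRight
  have hDr := D.toRight.card_toLeft_add_card_toRight
  omega

theorem exists_card_deletedInCopy_le (hc : 0 < c) (D : Finset (OMgraph M c).V) :
    ∃ j, (#(deletedInCopy M c D j) : ℝ) ≤ c * #D := by
  have hm : 1 / c ≤ (⌈1 / c⌉₊ : ℝ) := Nat.le_ceil _
  have hcm : 1 ≤ c * ⌈1 / c⌉₊ := by rwa [div_le_iff₀' hc] at hm
  have hne : (univ : Finset (Fin ⌈1 / c⌉₊)).Nonempty :=
    univ_nonempty_iff.mpr ⟨⟨0, Nat.lt_ceil.mpr (by rw [Nat.cast_zero]; positivity)⟩⟩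
  have hs : (#D.toRight.toLeft : ℝ) ≤ #(univ : Finset (Fin ⌈1 / c⌉₊)) • (c * #D) := by
    have : #D.toRight.toLeft ≤ #D := D.toRight.card_toLeft_le.trans D.card_toRight_le
    rw [card_univ, Fintype.card_fin, nsmul_eq_mul]
    calc (#D.toRight.toLeft : ℝ) ≤ #D := by exact_mod_cast this
      _ ≤ (c * ⌈1 / c⌉₊) * #D := le_mul_of_one_le_left (by positivity) hcm
      _ = _ := by ring
  obtain ⟨j, -, hj⟩ := exists_card_fiber_le_of_card_le_nsmul (f := Prod.fst) hne hs
  exact ⟨j, le_trans (by exact_mod_cast card_deletedInCopy_le_card_filter M c D j) hj⟩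

theorem connAvoiding_of_connAvoiding_copy {D : Finset (OMgraph M c).V} {j : Fin ⌈1 / c⌉₊}
    {a b : Fin n} (ha : (OMgraph M c).inp a ∉ D) (hb : (OMgraph M c).out b ∉ D)
    (h : ConnAvoiding M.Adj (deletedInCopy M c D j) (M.inp a) (M.out b)) :
    ConnAvoiding (OMgraph M c).Adj D ((OMgraph M c).inp a) ((OMgraph M c).out b) := by
  have hcopy : ConnAvoiding (OMgraph M c).Adj D (copy M c j (M.inp a)) (copy M c j (M.out b)) :=
    h.map (copy M c j) (fun x y hxy => Or.inr (Or.inl ⟨j, x, y, hxy, rfl, rfl⟩))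
      (fun x hx => by simpa [deletedInCopy] using hx)
  have hin : (OMgraph M c).Adj ((OMgraph M c).inp a) (copy M c j (M.inp a)) :=
    Or.inl ⟨a, j, rfl, rfl⟩
  have hout : (OMgraph M c).Adj (copy M c j (M.out b)) ((OMgraph M c).out b) :=
    Or.inr (Or.inr ⟨b, j, rfl, rfl⟩)
  exact (hcopy.cons hin ha).concat hout hb

end OMgraph

theorem OMgraph_maxSTRobust_general {n : ℕ} (M : IOGraph n) (c : ℝ)
    (hc0 : 0 < c)
    (hM : ∀ k : ℕ, (k : ℝ) ≤ c * n → STRobust M k (n - k)) :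
    MaxSTRobust (OMgraph M c) := by
  intro k hk D hD
  obtain ⟨j, hj⟩ := OMgraph.exists_card_deletedInCopy_le M c hc0 D
  have hjn : (#(OMgraph.deletedInCopy M c D j) : ℝ) ≤ c * n :=
    hj.trans (by gcongr; exact_mod_cast hD.trans hk)
  obtain ⟨A, B, hA, hB, hAB⟩ := hM _ hjn _ le_rfl
  have hcard := OMgraph.card_toLeft_add_card_deletedInCopy_add_card_toRight_toRight_le M c D j
  refine ⟨A \ D.toLeft, B \ D.toRight.toRight, ?_, ?_, fun a ha b hb => ?_⟩
  · have := le_card_sdiff D.toLeft A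
    omega
  · have := le_card_sdiff D.toRight.toRight B
    omega
  · rw [mem_sdiff] at ha hb
    exact OMgraph.connAvoiding_of_connAvoiding_copy M c (fun h => ha.2 (mem_toLeft.mpr h))
      (fun h => hb.2 (mem_toRight.mpr (mem_toRight.mpr h))) (hAB a ha.1 b hb.1)

/-- If `M` is a `c`-maximally ST-robust DAG with `n` inputs
and `n` outputs, then `O(M)` is maximally ST-robust, i.e. `(k, n−k)`-ST-robust
for all `0 ≤ k ≤ n`, with respect to its `n` new inputs and `n` new outputs. -/
theorem OMgraph_maxSTRobust {n : ℕ} (M : IOGraph n) (c : ℝ)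
    (hc0 : 0 < c) (hc1 : c ≤ 1)
    (hM : ∀ k : ℕ, (k : ℝ) ≤ c * n → STRobust M k (n - k)) :
    MaxSTRobust (OMgraph M c) :=
  OMgraph_maxSTRobust_general M c hc0 hM
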